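/- Let |Ψ(0)⟩, |Ψ(1)⟩ be pure states of H_A ⊗ H_B with F(tr_A|Ψ(0)⟩⟨Ψ(0)|, tr_A|Ψ(1)⟩⟨Ψ(1)|) ≥ 1 − ε. Then there exists a unitary U_A on H_A such that |⟨Ψ(0)| (U_A ⊗ I_B) |Ψ(1)⟩| ≥ 1 − ε. -/

import Mathlib

open scoped BigOperators ComplexOrder

noncomputable section

namespace QBC

/-- Total matrix square root (junk value `0` off the PSD cone). -/
def msqrt {n : Type*} [Fintype n] [DecidableEq n] (A : Matrix n n ℂ) : Matrix n n ℂ :=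
  open scoped Classical in
  if h : A.PosSemidef then
    h.1.eigenvectorUnitary.1 * Matrix.diagonal (fun i => ((h.1.eigenvalues i).sqrt : ℂ)) *
      (star h.1.eigenvectorUnitary : Matrix n n ℂ) else 0

/-- Quantum fidelity `F(ρ,σ) = tr √(√ρ σ √ρ)`. -/
def fidelity {n : Type*} [Fintype n] [DecidableEq n] (ρ σ : Matrix n n ℂ) : ℝ :=
  ((msqrt (msqrt ρ * σ * msqrt ρ)).trace).re

/-- Density operator: positive semidefinite with unit trace. -/
def IsDensity {n : Type*} [Fintype n] [DecidableEq n] (ρ : Matrix n n ℂ) : Prop :=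
  ρ.PosSemidef ∧ ρ.trace = 1

/-- Inner product `⟨ψ|φ⟩`. -/
def ip {α : Type*} [Fintype α] (ψ φ : α → ℂ) : ℂ := ∑ x, star (ψ x) * φ x

/-- Rank-one projection `|ψ⟩⟨ψ|`. -/
def proj {α : Type*} [Fintype α] (ψ : α → ℂ) : Matrix α α ℂ :=
  Matrix.of fun x y => ψ x * star (ψ y)

/-- Partial trace over the first tensor factor. -/
def ptraceA {A B : Type*} [Fintype A] (M : Matrix (A × B) (A × B) ℂ) : Matrix B B ℂ :=
  Matrix.of fun i j => ∑ a, M (a, i) (a, j)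

/-- `(U ⊗ I_B)` acting on a bipartite vector. -/
def applyA {A B : Type*} [Fintype A] (U : Matrix A A ℂ) (ψ : A × B → ℂ) : A × B → ℂ :=
  fun x => ∑ a', U x.1 a' * ψ (a', x.2)


section Aux
open Matrix
variable {n m : Type*} [Fintype n] [DecidableEq n] [Fintype m] [DecidableEq m]

section cfun
variable {H : Matrix n n ℂ} (hH : H.IsHermitian)

def cfun (f : ℝ → ℝ) : Matrix n n ℂ :=
  (hH.eigenvectorUnitary : Matrix n n ℂ) *
    Matrix.diagonal (fun i => (f (hH.eigenvalues i) : ℂ)) *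
    (star (hH.eigenvectorUnitary : Matrix n n ℂ))

lemma cfun_mul (f g : ℝ → ℝ) : cfun hH f * cfun hH g = cfun hH (f * g) := by
  have h1 : (star (hH.eigenvectorUnitary : Matrix n n ℂ)) *
      (hH.eigenvectorUnitary : Matrix n n ℂ) = 1 :=
    Matrix.mem_unitaryGroup_iff'.mp hH.eigenvectorUnitary.2
  have h2 : (fun i => (f (hH.eigenvalues i) : ℂ) * (g (hH.eigenvalues i) : ℂ))
      = fun i => (((f * g) (hH.eigenvalues i) : ℝ) : ℂ) := by
    funext i; simp [Pi.mul_apply]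
  simp only [cfun, Matrix.mul_assoc]
  rw [← Matrix.mul_assoc (star _) _, h1, Matrix.one_mul,
    ← Matrix.mul_assoc (Matrix.diagonal _), Matrix.diagonal_mul_diagonal, h2]

lemma cfun_add (f g : ℝ → ℝ) : cfun hH f + cfun hH g = cfun hH (f + g) := by
  have : (Matrix.diagonal (fun i => (f (hH.eigenvalues i) : ℂ)))
      + (Matrix.diagonal (fun i => (g (hH.eigenvalues i) : ℂ)))
      = Matrix.diagonal (fun i => (((f + g) (hH.eigenvalues i) : ℝ) : ℂ)) := by
    rw [Matrix.diagonal_add]; congr 1; funext i; simp [Pi.add_apply]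
  simp only [cfun, ← Matrix.add_mul, ← Matrix.mul_add, this]

lemma cfun_id : cfun hH (fun x => x) = H := by
  exact hH.spectral_theorem.symm

lemma cfun_congr {f g : ℝ → ℝ} (h : ∀ i, f (hH.eigenvalues i) = g (hH.eigenvalues i)) :
    cfun hH f = cfun hH g := by
  have : (fun i => (f (hH.eigenvalues i) : ℂ)) = fun i => (g (hH.eigenvalues i) : ℂ) := by
    funext i; rw [h]
  unfold cfun; rw [this]

lemma cfun_one : cfun hH (fun _ => 1) = 1 := by
  have h1 : (hH.eigenvectorUnitary : Matrix n n ℂ) *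
      (star (hH.eigenvectorUnitary : Matrix n n ℂ)) = 1 :=
    Matrix.mem_unitaryGroup_iff.mp hH.eigenvectorUnitary.2
  simp [cfun, h1]

lemma cfun_zero : cfun hH (fun _ => 0) = 0 := by
  simp [cfun]

lemma cfun_conjTranspose (f : ℝ → ℝ) : (cfun hH f)ᴴ = cfun hH f := by
  simp only [cfun, Matrix.conjTranspose_mul, Matrix.diagonal_conjTranspose,
    Matrix.star_eq_conjTranspose, Matrix.conjTranspose_conjTranspose, Matrix.mul_assoc]
  congr 2
  funext i
  simp [Pi.star_def]

lemma cfun_isHermitian (f : ℝ → ℝ) : (cfun hH f).IsHermitian := cfun_conjTranspose hH f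

lemma cfun_posSemidef {f : ℝ → ℝ} (h : ∀ i, 0 ≤ f (hH.eigenvalues i)) :
    (cfun hH f).PosSemidef := by
  have hd : (Matrix.diagonal (fun i => (f (hH.eigenvalues i) : ℂ))).PosSemidef := by
    rw [Matrix.posSemidef_diagonal_iff]
    intro i
    exact_mod_cast h i
  simpa [cfun, Matrix.mul_assoc, Matrix.star_eq_conjTranspose] using
    hd.mul_mul_conjTranspose_same (hH.eigenvectorUnitary : Matrix n n ℂ)

lemma cfun_trace (f : ℝ → ℝ) : (cfun hH f).trace = ((∑ i, f (hH.eigenvalues i) : ℝ) : ℂ) := by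
  have h1 : (star (hH.eigenvectorUnitary : Matrix n n ℂ)) *
      (hH.eigenvectorUnitary : Matrix n n ℂ) = 1 :=
    Matrix.mem_unitaryGroup_iff'.mp hH.eigenvectorUnitary.2
  rw [cfun, Matrix.trace_mul_cycle, h1, Matrix.one_mul, Matrix.trace_diagonal]
  push_cast
  rfl

lemma cfun_diag_eq (f : ℝ → ℝ) :
    (star (hH.eigenvectorUnitary : Matrix n n ℂ)) * cfun hH f *
      (hH.eigenvectorUnitary : Matrix n n ℂ)
      = Matrix.diagonal (fun i => (f (hH.eigenvalues i) : ℂ)) := by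
  have h1 : (star (hH.eigenvectorUnitary : Matrix n n ℂ)) *
      (hH.eigenvectorUnitary : Matrix n n ℂ) = 1 :=
    Matrix.mem_unitaryGroup_iff'.mp hH.eigenvectorUnitary.2
  have h2 : (hH.eigenvectorUnitary : Matrix n n ℂ) *
      (star (hH.eigenvectorUnitary : Matrix n n ℂ)) = 1 :=
    Matrix.mem_unitaryGroup_iff.mp hH.eigenvectorUnitary.2
  rw [cfun, ← Matrix.mul_assoc, ← Matrix.mul_assoc, h1, Matrix.one_mul, Matrix.mul_assoc, h1,
    Matrix.mul_one]

lemma cfun_inj {f g : ℝ → ℝ} (h : cfun hH f = cfun hH g) :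
    ∀ i, f (hH.eigenvalues i) = g (hH.eigenvalues i) := by
  intro i
  have := congrArg (fun M => ((star (hH.eigenvectorUnitary : Matrix n n ℂ)) * M *
    (hH.eigenvectorUnitary : Matrix n n ℂ)) i i) h
  simp only [cfun_diag_eq, Matrix.diagonal_apply_eq] at this
  exact_mod_cast this

end cfun

lemma msqrt_eq_cfun {H : Matrix n n ℂ} (h : H.PosSemidef) :
    msqrt H = cfun h.1 Real.sqrt := by
  rw [msqrt, dif_pos h]
  rfl

/-- if `VᴴV` is idempotent then `V * (VᴴV) = V`. -/
lemma mul_self_conj_idem {V : Matrix m n ℂ} (h : (Vᴴ * V) * (Vᴴ * V) = Vᴴ * V) :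
    V * (Vᴴ * V) = V := by
  have key : (V * (Vᴴ * V) - V)ᴴ * (V * (Vᴴ * V) - V) = 0 := by
    have hherm : (Vᴴ * V)ᴴ = Vᴴ * V := by
      simp [Matrix.conjTranspose_mul, Matrix.mul_assoc]
    simp only [Matrix.conjTranspose_sub, Matrix.conjTranspose_mul,
      Matrix.conjTranspose_conjTranspose, Matrix.sub_mul, Matrix.mul_sub]
    have e1 : Vᴴ * V * Vᴴ * (V * (Vᴴ * V)) = Vᴴ * V := by
      rw [show Vᴴ * V * Vᴴ * (V * (Vᴴ * V)) = (Vᴴ * V) * (Vᴴ * V) * (Vᴴ * V) by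
        simp only [Matrix.mul_assoc], h, h]
    have e2 : Vᴴ * V * Vᴴ * V = Vᴴ * V := by
      rw [show Vᴴ * V * Vᴴ * V = (Vᴴ * V) * (Vᴴ * V) by simp only [Matrix.mul_assoc], h]
    have e3 : Vᴴ * (V * (Vᴴ * V)) = Vᴴ * V := by
      rw [show Vᴴ * (V * (Vᴴ * V)) = (Vᴴ * V) * (Vᴴ * V) by simp only [Matrix.mul_assoc], h]
    rw [e1, e2, e3]
    simp
  have := Matrix.conjTranspose_mul_self_eq_zero.mp key
  exact sub_eq_zero.mp this

/-- if `WWᴴ` is idempotent then `(WWᴴ) * W = W`. -/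
lemma self_conj_mul_idem {W : Matrix m n ℂ} (h : (W * Wᴴ) * (W * Wᴴ) = W * Wᴴ) :
    (W * Wᴴ) * W = W := by
  have h' : (Wᴴᴴ * Wᴴ) * (Wᴴᴴ * Wᴴ) = Wᴴᴴ * Wᴴ := by
    simpa using h
  have := mul_self_conj_idem h'
  calc (W * Wᴴ) * W = (Wᴴ * (Wᴴᴴ * Wᴴ))ᴴ := by
        simp [Matrix.conjTranspose_mul, Matrix.mul_assoc]
    _ = W := by rw [mul_self_conj_idem h']; simp [Matrix.conjTranspose_mul, Matrix.mul_assoc]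


/-- sum of a {0,1}-valued function equals the number of ones -/
lemma sum_eq_card_ones {p : n → ℝ} (hp : ∀ i, p i = 0 ∨ p i = 1) :
    ∑ i, p i = Fintype.card {i // p i = 1} := by
  classical
  rw [Fintype.card_subtype]
  rw [← Finset.sum_filter_add_sum_filter_not Finset.univ (fun i => p i = 1)]
  have h1 : ∑ i ∈ Finset.univ.filter (fun i => p i = 1), p i
      = (Finset.univ.filter (fun i => p i = 1)).card := by
    rw [Finset.sum_congr rfl (fun i hi => (Finset.mem_filter.mp hi).2)]
    simp
  have h2 : ∑ i ∈ Finset.univ.filter (fun i => ¬ p i = 1), p i = 0 := by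
    refine Finset.sum_eq_zero fun i hi => ?_
    rcases hp i with h | h
    · exact h
    · exact absurd h (Finset.mem_filter.mp hi).2
  rw [h1, h2, add_zero]

/-- the connecting partial isometry between two 0/1 diagonals of equal rank -/
lemma exists_E (p q : n → ℝ) (hp : ∀ i, p i = 0 ∨ p i = 1) (hq : ∀ i, q i = 0 ∨ q i = 1)
    (hcard : Fintype.card {i // p i = 1} = Fintype.card {i // q i = 1}) :
    ∃ E : Matrix n n ℂ,
      Eᴴ * E = Matrix.diagonal (fun i => (p i : ℂ)) ∧
      E * Eᴴ = Matrix.diagonal (fun i => (q i : ℂ)) := by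
  classical
  let e : {i // p i = 1} ≃ {j // q j = 1} := Fintype.equivOfCardEq hcard
  refine ⟨Matrix.of fun j i =>
    if h : p i = 1 then (if j = (e ⟨i, h⟩ : {j // q j = 1}).1 then 1 else 0) else 0, ?_, ?_⟩
  · ext i i'
    simp only [Matrix.mul_apply, Matrix.conjTranspose_apply, Matrix.of_apply]
    by_cases hi : p i = 1
    · by_cases hii' : i = i'
      · subst hii'
        rw [Matrix.diagonal_apply_eq]
        rw [Finset.sum_eq_single ((e ⟨i, hi⟩ : {j // q j = 1}).1)]
        · simp only [dif_pos hi]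
          simp [hi]
        · intro b _ hb; simp [hi, hb]
        · intro h; exact absurd (Finset.mem_univ _) h
      · rw [Matrix.diagonal_apply_ne _ hii']
        refine Finset.sum_eq_zero fun j _ => ?_
        by_cases hi' : p i' = 1
        · simp only [dif_pos hi, dif_pos hi']
          by_cases h1 : j = (e ⟨i, hi⟩ : {j // q j = 1}).1
          · have h2 : j ≠ (e ⟨i', hi'⟩ : {j // q j = 1}).1 := by
              intro h2
              apply hii'
              have : e ⟨i, hi⟩ = e ⟨i', hi'⟩ := Subtype.ext (h1 ▸ h2)
              exact congrArg Subtype.val (e.injective this)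
            rw [if_pos h1, if_neg h2, mul_zero]
          · simp [h1]
        · simp [hi']
    · rcases hp i with h0 | h0
      · have : ∀ j : n, star ((if h : p i = 1 then
            (if j = (e ⟨i, h⟩ : {j // q j = 1}).1 then (1:ℂ) else 0) else 0)) = 0 := by
          intro j; rw [dif_neg hi]; simp
        rw [Finset.sum_congr rfl (fun j _ => by rw [this j, zero_mul])]
        by_cases hii' : i = i'
        · subst hii'; simp [h0]
        · simp [Matrix.diagonal_apply_ne _ hii']
      · exact absurd h0 hi
  · ext j j'
    simp only [Matrix.mul_apply, Matrix.conjTranspose_apply, Matrix.of_apply]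
    by_cases hjj' : j = j'
    · subst hjj'
      rw [Matrix.diagonal_apply_eq]
      by_cases hqj : q j = 1
      · rw [hqj]
        rw [Finset.sum_eq_single ((e.symm ⟨j, hqj⟩ : {i // p i = 1}).1)]
        · have hp0 : p ((e.symm ⟨j, hqj⟩ : {i // p i = 1}).1) = 1 :=
            (e.symm ⟨j, hqj⟩).2
          rw [dif_pos hp0]
          have hcj : (e ⟨(e.symm ⟨j, hqj⟩ : {i // p i = 1}).1, hp0⟩ : {j // q j = 1}).1 = j := by
            have h3 : (⟨(e.symm ⟨j, hqj⟩ : {i // p i = 1}).1, hp0⟩ : {i // p i = 1})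
                = e.symm ⟨j, hqj⟩ := Subtype.ext rfl
            rw [h3, e.apply_symm_apply]
          rw [hcj]
          simp
        · intro b _ hb
          by_cases hpb : p b = 1
          · rw [dif_pos hpb]
            by_cases h1 : j = (e ⟨b, hpb⟩ : {j // q j = 1}).1
            · exfalso
              apply hb
              have : e.symm ⟨j, hqj⟩ = ⟨b, hpb⟩ := by
                rw [show (⟨j, hqj⟩ : {j // q j = 1}) = e ⟨b, hpb⟩ from Subtype.ext h1]
                exact e.symm_apply_apply _
              rw [this]
            · simp [h1]
          · simp [hpb]
        · intro h; exact absurd (Finset.mem_univ _) h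
      · have hq0 : q j = 0 := (hq j).resolve_right hqj
        rw [hq0]
        refine Finset.sum_eq_zero fun i _ => ?_
        by_cases hpi : p i = 1
        · rw [dif_pos hpi]
          by_cases h1 : j = (e ⟨i, hpi⟩ : {j // q j = 1}).1
          · exact absurd (h1 ▸ (e ⟨i, hpi⟩).2) hqj
          · simp [h1]
        · simp [hpi]
    · rw [Matrix.diagonal_apply_ne _ hjj']
      refine Finset.sum_eq_zero fun i _ => ?_
      by_cases hpi : p i = 1
      · rw [dif_pos hpi]
        by_cases h1 : j = (e ⟨i, hpi⟩ : {j // q j = 1}).1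
        · have h2 : j' ≠ (e ⟨i, hpi⟩ : {j // q j = 1}).1 := fun h2 => hjj' (h1.trans h2.symm)
          simp [h1, h2]
        · simp [h1]
      · simp [hpi]




def gfun (x : ℝ) : ℝ := if x = 0 then 0 else (Real.sqrt x)⁻¹
def indfun (x : ℝ) : ℝ := if x = 0 then 0 else 1
def pfun (x : ℝ) : ℝ := 1 - indfun x

lemma s_gxg {x : ℝ} (hx : 0 ≤ x) : gfun x * (x * gfun x) = indfun x := by
  unfold gfun indfun
  by_cases h0 : x = 0
  · simp [h0]
  · have hxpos : 0 < x := lt_of_le_of_ne hx (Ne.symm h0)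
    have hs : Real.sqrt x ≠ 0 := ne_of_gt (Real.sqrt_pos.mpr hxpos)
    rw [if_neg h0, if_neg h0]
    field_simp
    rw [Real.sq_sqrt hx]

lemma s_gind (x : ℝ) : gfun x * indfun x = gfun x := by
  unfold gfun indfun
  by_cases h0 : x = 0 <;> simp [h0]

lemma s_gsq {x : ℝ} (hx : 0 ≤ x) : gfun x * Real.sqrt x = indfun x := by
  unfold gfun indfun
  by_cases h0 : x = 0
  · simp [h0]
  · have hxpos : 0 < x := lt_of_le_of_ne hx (Ne.symm h0)
    have hs : Real.sqrt x ≠ 0 := ne_of_gt (Real.sqrt_pos.mpr hxpos)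
    rw [if_neg h0, if_neg h0, inv_mul_cancel₀ hs]

lemma s_kill (x : ℝ) : pfun x * (x * pfun x) = 0 := by
  unfold pfun indfun
  by_cases h0 : x = 0 <;> simp [h0]

lemma s_psq {x : ℝ} (hx : 0 ≤ x) : pfun x * Real.sqrt x = 0 := by
  unfold pfun indfun
  by_cases h0 : x = 0 <;> simp [h0]

lemma s_pidem (x : ℝ) : pfun x * pfun x = pfun x := by
  unfold pfun indfun
  by_cases h0 : x = 0 <;> simp [h0]

lemma s_indsum (x : ℝ) : indfun x + pfun x = 1 := by
  unfold pfun; ring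

lemma s_p01 (x : ℝ) : pfun x = 0 ∨ pfun x = 1 := by
  unfold pfun indfun
  by_cases h0 : x = 0 <;> simp [h0]

lemma cfun_mul3 {H : Matrix n n ℂ} (hH : H.IsHermitian) (f k : ℝ → ℝ) :
    cfun hH f * (H * cfun hH k) = cfun hH (fun x => f x * (x * k x)) := by
  have h1 : cfun hH f * (cfun hH (fun x => x) * cfun hH k)
      = cfun hH ((fun x => x) * k) |> fun _ => True := trivial
  have h2 : cfun hH (fun x => x) * cfun hH k = cfun hH ((fun x => x) * k) := cfun_mul hH _ _
  have h3 : cfun hH f * cfun hH ((fun x => x) * k) = cfun hH (f * ((fun x => x) * k)) :=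
    cfun_mul hH _ _
  have h4 : cfun hH f * (cfun hH (fun x => x) * cfun hH k)
      = cfun hH (f * ((fun x => x) * k)) := by rw [h2, h3]
  rw [cfun_id hH] at h4
  exact h4

lemma eigenvalues_of_idem {P : Matrix n n ℂ} (hP : P.IsHermitian) (h : P * P = P) :
    ∀ i, hP.eigenvalues i = 0 ∨ hP.eigenvalues i = 1 := by
  intro i
  have h2 : cfun hP ((fun x => x) * (fun x => x)) = cfun hP (fun x => x) := by
    rw [← cfun_mul, cfun_id, h]
  have h4 : hP.eigenvalues i * hP.eigenvalues i = hP.eigenvalues i := cfun_inj hP h2 i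
  have h5 : hP.eigenvalues i * (hP.eigenvalues i - 1) = 0 := by ring_nf; linarith [h4]
  rcases mul_eq_zero.mp h5 with h | h
  · exact Or.inl h
  · exact Or.inr (by linarith [sub_eq_zero.mp h])

/-- Polar decomposition of a square complex matrix. -/
theorem exists_polar (K : Matrix n n ℂ) :
    ∃ U ∈ Matrix.unitaryGroup n ℂ, K = U * msqrt (Kᴴ * K) := by
  classical
  have hpsd : (Kᴴ * K).PosSemidef := Matrix.posSemidef_conjTranspose_mul_self K
  set hH : (Kᴴ * K).IsHermitian := hpsd.1 with hHdef
  have hev : ∀ i, 0 ≤ hH.eigenvalues i := fun i => hpsd.eigenvalues_nonneg i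
  -- main objects
  set G : Matrix n n ℂ := cfun hH gfun with hG
  set V : Matrix n n ℂ := K * G with hV
  have hGherm : Gᴴ = G := cfun_conjTranspose hH gfun
  have hVV : Vᴴ * V = cfun hH indfun := by
    have e1 : Vᴴ * V = G * ((Kᴴ * K) * G) := by
      rw [hV, Matrix.conjTranspose_mul, hGherm, Matrix.mul_assoc, ← Matrix.mul_assoc Kᴴ]
    rw [e1, hG, cfun_mul3]
    exact cfun_congr hH (f := fun x => gfun x * (x * gfun x)) (g := indfun)
      fun i => s_gxg (hev i)
  have hVcind : V * cfun hH indfun = V := by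
    rw [hV, Matrix.mul_assoc, hG, cfun_mul]
    congr 1
    exact cfun_congr hH (f := gfun * indfun) (g := gfun) fun i => s_gind _
  have hKD : K * cfun hH pfun = 0 := by
    have hcc : (K * cfun hH pfun)ᴴ * (K * cfun hH pfun) = 0 := by
      rw [Matrix.conjTranspose_mul, cfun_conjTranspose]
      calc cfun hH pfun * Kᴴ * (K * cfun hH pfun)
          = cfun hH pfun * ((Kᴴ * K) * cfun hH pfun) := by
            simp only [Matrix.mul_assoc]
        _ = 0 := by
            rw [cfun_mul3, cfun_congr hH (f := fun x => pfun x * (x * pfun x))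
              (g := fun _ => 0) (fun i => s_kill _), cfun_zero]
    exact Matrix.conjTranspose_mul_self_eq_zero.mp hcc
  have t3 : cfun hH pfun = 1 - cfun hH indfun := by
    have h := cfun_add hH indfun pfun
    rw [cfun_congr hH (f := indfun + pfun) (g := fun _ => 1) (fun i => s_indsum _),
      cfun_one] at h
    exact eq_sub_of_add_eq' h
  have hKind : K * cfun hH indfun = K := by
    have : K * (1 - cfun hH indfun) = 0 := by rw [← t3]; exact hKD
    rw [Matrix.mul_sub, Matrix.mul_one, sub_eq_zero] at this
    exact this.symm
  have hQidem : (V * Vᴴ) * (V * Vᴴ) = V * Vᴴ := by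
    calc (V * Vᴴ) * (V * Vᴴ) = (V * (Vᴴ * V)) * Vᴴ := by simp only [Matrix.mul_assoc]
    _ = V * Vᴴ := by rw [hVV, hVcind]
  have hQV : (V * Vᴴ) * V = V := self_conj_mul_idem hQidem
  -- the projection Q₁ = 1 - V Vᴴ
  set Q1 : Matrix n n ℂ := 1 - V * Vᴴ with hQ1def
  have hQ1herm : Q1.IsHermitian := by
    unfold Matrix.IsHermitian
    rw [hQ1def, Matrix.conjTranspose_sub, Matrix.conjTranspose_one, Matrix.conjTranspose_mul,
      Matrix.conjTranspose_conjTranspose]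
  have hQ1idem : Q1 * Q1 = Q1 := by
    have h : (1 - V * Vᴴ) * (1 - V * Vᴴ) = 1 - V * Vᴴ := by
      rw [Matrix.sub_mul, Matrix.one_mul, Matrix.mul_sub, Matrix.mul_one, hQidem]
      abel
    rw [hQ1def]
    exact h
  -- p/q functions and cardinality
  set p : n → ℝ := fun i => pfun (hH.eigenvalues i) with hp
  set q : n → ℝ := hQ1herm.eigenvalues with hq
  have hp01 : ∀ i, p i = 0 ∨ p i = 1 := fun i => s_p01 _
  have hq01 : ∀ j, q j = 0 ∨ q j = 1 := eigenvalues_of_idem hQ1herm hQ1idem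
  have htr : ∑ i, p i = ∑ j, q j := by
    have t1 : (cfun hH pfun).trace = ((∑ i, p i : ℝ) : ℂ) := cfun_trace hH _
    have t2 : Q1.trace = ((∑ j, q j : ℝ) : ℂ) := by
      have h := cfun_trace hQ1herm (fun x => x)
      rw [cfun_id] at h
      exact h
    have t4 : (cfun hH pfun).trace = Q1.trace := by
      rw [t3, hQ1def, Matrix.trace_sub, Matrix.trace_sub, ← hVV, Matrix.trace_mul_comm]
    rw [t1, t2] at t4
    exact_mod_cast t4
  have hcard : Fintype.card {i // p i = 1} = Fintype.card {j // q j = 1} := by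
    have h := (sum_eq_card_ones hp01).symm.trans (htr.trans (sum_eq_card_ones hq01))
    exact_mod_cast h
  obtain ⟨E, hE1, hE2⟩ := exists_E p q hp01 hq01 hcard
  set uH : Matrix n n ℂ := (hH.eigenvectorUnitary : Matrix n n ℂ) with huHdef
  set uQ : Matrix n n ℂ := (hQ1herm.eigenvectorUnitary : Matrix n n ℂ) with huQdef
  have huH1 : uHᴴ * uH = 1 := by
    rw [← Matrix.star_eq_conjTranspose]
    exact Matrix.mem_unitaryGroup_iff'.mp hH.eigenvectorUnitary.2
  have huQ1 : uQᴴ * uQ = 1 := by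
    rw [← Matrix.star_eq_conjTranspose]
    exact Matrix.mem_unitaryGroup_iff'.mp hQ1herm.eigenvectorUnitary.2
  set W : Matrix n n ℂ := uQ * E * uHᴴ with hW
  have hWW : Wᴴ * W = cfun hH pfun := by
    have e1 : Wᴴ * W = uH * (Eᴴ * ((uQᴴ * uQ) * (E * uHᴴ))) := by
      rw [hW]
      simp only [Matrix.conjTranspose_mul, Matrix.conjTranspose_conjTranspose,
        Matrix.mul_assoc]
    rw [e1, huQ1, Matrix.one_mul, ← Matrix.mul_assoc Eᴴ, hE1, cfun, ← huHdef,
      Matrix.star_eq_conjTranspose]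
    rw [hp]
    simp only [Matrix.mul_assoc]
  have hWWc : W * Wᴴ = Q1 := by
    have e1 : W * Wᴴ = uQ * (E * ((uHᴴ * uH) * (Eᴴ * uQᴴ))) := by
      rw [hW]
      simp only [Matrix.conjTranspose_mul, Matrix.conjTranspose_conjTranspose,
        Matrix.mul_assoc]
    rw [e1, huH1, Matrix.one_mul, ← Matrix.mul_assoc E, hE2]
    have h := cfun_id hQ1herm
    rw [cfun, ← huQdef, Matrix.star_eq_conjTranspose] at h
    rw [← Matrix.mul_assoc]
    exact h
  -- algebraic facts about V and W
  have hQ1W : Q1 * W = W := by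
    have h1 : (W * Wᴴ) * (W * Wᴴ) = W * Wᴴ := by rw [hWWc]; exact hQ1idem
    have h := self_conj_mul_idem h1
    rwa [hWWc] at h
  have hWP1 : W * cfun hH pfun = W := by
    have h1 : (Wᴴ * W) * (Wᴴ * W) = Wᴴ * W := by
      rw [hWW, cfun_mul, cfun_congr hH (f := pfun * pfun) (g := pfun) (fun i => s_pidem _)]
    have h := mul_self_conj_idem h1
    rwa [hWW] at h
  have hVQ : Vᴴ * (V * Vᴴ) = Vᴴ := by
    calc Vᴴ * (V * Vᴴ) = ((V * Vᴴ) * V)ᴴ := by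
          simp only [Matrix.conjTranspose_mul, Matrix.conjTranspose_conjTranspose,
            Matrix.mul_assoc]
    _ = Vᴴ := by rw [hQV]
  have hVW : Vᴴ * W = 0 := by
    calc Vᴴ * W = Vᴴ * (Q1 * W) := by rw [hQ1W]
    _ = (Vᴴ * Q1) * W := by rw [Matrix.mul_assoc]
    _ = 0 := by
        rw [hQ1def, Matrix.mul_sub, Matrix.mul_one, hVQ, sub_self, Matrix.zero_mul]
  have hWV : Wᴴ * V = 0 := by
    have h := congrArg Matrix.conjTranspose hVW
    simpa [Matrix.conjTranspose_mul] using h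
  -- the unitary
  refine ⟨V + W, ?_, ?_⟩
  · rw [Matrix.mem_unitaryGroup_iff', Matrix.star_eq_conjTranspose, Matrix.conjTranspose_add,
      Matrix.add_mul, Matrix.mul_add, Matrix.mul_add, hVV, hWW, hVW, hWV]
    rw [add_zero, zero_add, cfun_add,
      cfun_congr hH (f := indfun + pfun) (g := fun _ => 1) (fun i => s_indsum _), cfun_one]
  · have hmsq : msqrt (Kᴴ * K) = cfun hH Real.sqrt := msqrt_eq_cfun hpsd
    have hVP : V * msqrt (Kᴴ * K) = K := by
      rw [hmsq, hV, Matrix.mul_assoc, hG, cfun_mul,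
        cfun_congr hH (f := gfun * Real.sqrt) (g := indfun) (fun i => s_gsq (hev i)), hKind]
    have hWP : W * msqrt (Kᴴ * K) = 0 := by
      conv_lhs => rw [hmsq, ← hWP1, Matrix.mul_assoc, cfun_mul,
        cfun_congr hH (f := pfun * Real.sqrt) (g := fun _ => 0) (fun i => s_psq (hev i)),
        cfun_zero, Matrix.mul_zero]
    rw [Matrix.add_mul, hVP, hWP, add_zero]


/-- contraction predicate -/
def Con {a b : Type*} [Fintype a] [Fintype b] [DecidableEq b] (D : Matrix a b ℂ) : Prop :=
  ((1 : Matrix b b ℂ) - Dᴴ * D).PosSemidef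

lemma con_unitary {U : Matrix n n ℂ} (hU : U ∈ Matrix.unitaryGroup n ℂ) : Con U := by
  have h : Uᴴ * U = 1 := by
    rw [← Matrix.star_eq_conjTranspose]; exact Matrix.mem_unitaryGroup_iff'.mp hU
  unfold Con
  rw [h, sub_self]
  exact Matrix.PosSemidef.zero

lemma con_of_idem {a : Type*} [Fintype a] {V : Matrix a n ℂ}
    (h : (Vᴴ * V) * (Vᴴ * V) = Vᴴ * V) : Con V := by
  have hherm : ((1 : Matrix n n ℂ) - Vᴴ * V)ᴴ = 1 - Vᴴ * V := by
    simp [Matrix.conjTranspose_sub, Matrix.conjTranspose_mul, Matrix.mul_assoc]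
  have hsq : ((1 : Matrix n n ℂ) - Vᴴ * V)ᴴ * ((1 : Matrix n n ℂ) - Vᴴ * V)
      = 1 - Vᴴ * V := by
    rw [hherm]
    simp only [Matrix.sub_mul, Matrix.mul_sub, Matrix.one_mul, Matrix.mul_one, h]
    abel
  unfold Con
  rw [← hsq]
  exact Matrix.posSemidef_conjTranspose_mul_self _

lemma con_mul {a b c : Type*} [Fintype a] [Fintype b] [DecidableEq b] [Fintype c]
    [DecidableEq c] {D : Matrix a b ℂ} {E : Matrix b c ℂ} (hD : Con D) (hE : Con E) :
    Con (D * E) := by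
  have key : (1 : Matrix c c ℂ) - (D * E)ᴴ * (D * E)
      = Eᴴ * ((1 : Matrix b b ℂ) - Dᴴ * D) * (Eᴴ)ᴴ + ((1 : Matrix c c ℂ) - Eᴴ * E) := by
    rw [Matrix.conjTranspose_mul, Matrix.conjTranspose_conjTranspose, Matrix.mul_sub,
      Matrix.sub_mul, Matrix.mul_one]
    have : Eᴴ * (Dᴴ * D) * E = Eᴴ * Dᴴ * (D * E) := by simp only [Matrix.mul_assoc]
    rw [this]
    abel
  unfold Con
  rw [key]
  exact (hD.mul_mul_conjTranspose_same Eᴴ).add hE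

/-- the dotProduct form of a contraction -/
lemma con_dot {a b : Type*} [Fintype a] [Fintype b] [DecidableEq b] {D : Matrix a b ℂ}
    (hD : Con D) (x : b → ℂ) :
    (dotProduct (star (D *ᵥ x)) (D *ᵥ x)).re ≤ (dotProduct (star x) x).re := by
  have h0 := hD.re_dotProduct_nonneg x
  have h2 : dotProduct (star (D *ᵥ x)) (D *ᵥ x)
      = dotProduct (star x) ((Dᴴ * D) *ᵥ x) := by
    rw [Matrix.star_mulVec, ← Matrix.dotProduct_mulVec, Matrix.mulVec_mulVec]
  have h1 : dotProduct (star x) (((1 : Matrix b b ℂ) - Dᴴ * D) *ᵥ x)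
      = dotProduct (star x) x - dotProduct (star (D *ᵥ x)) (D *ᵥ x) := by
    rw [Matrix.sub_mulVec, dotProduct_sub, Matrix.one_mulVec, h2]
  rw [h1, map_sub] at h0
  simp only [RCLike.re_to_complex] at h0
  linarith

/-- unit-norm quadratic form of a contraction has modulus at most one -/
lemma con_quad_le_one {b : Type*} [Fintype b] [DecidableEq b] {D : Matrix b b ℂ}
    (hD : Con D) (x : b → ℂ) (hx : dotProduct (star x) x = 1) :
    ‖dotProduct (star x) (D *ᵥ x)‖ ≤ 1 := by
  set x' : EuclideanSpace ℂ b := (WithLp.equiv 2 (b → ℂ)).symm x with hx'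
  set y' : EuclideanSpace ℂ b := (WithLp.equiv 2 (b → ℂ)).symm (D *ᵥ x) with hy'
  have hinner : (inner ℂ x' y' : ℂ) = dotProduct (star x) (D *ᵥ x) :=
    (EuclideanSpace.inner_eq_star_dotProduct x' y').trans (dotProduct_comm _ _)
  have hxx : (inner ℂ x' x' : ℂ) = 1 := by
    rw [EuclideanSpace.inner_eq_star_dotProduct, dotProduct_comm]; exact hx
  have hnx : ‖x'‖ = 1 := by
    have h := inner_self_eq_norm_sq_to_K (𝕜 := ℂ) x'
    rw [hxx] at h
    have h1 : ‖x'‖ ^ 2 = 1 := by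
      have h2 : ((‖x'‖ : ℂ)) ^ 2 = 1 := h.symm
      exact_mod_cast h2
    nlinarith [norm_nonneg x']
  have hny : ‖y'‖ ≤ 1 := by
    have hyy : (inner ℂ y' y' : ℂ) = dotProduct (star (D *ᵥ x)) (D *ᵥ x) :=
      (EuclideanSpace.inner_eq_star_dotProduct y' y').trans (dotProduct_comm _ _)
    have h3 := con_dot hD x
    rw [hx] at h3
    have h5 := inner_self_eq_norm_sq_to_K (𝕜 := ℂ) y'
    rw [hyy] at h5
    have h6 : ‖y'‖ ^ 2 ≤ 1 := by
      have h7 : (dotProduct (star (D *ᵥ x)) (D *ᵥ x)).re = ‖y'‖ ^ 2 := by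
        rw [h5]
        norm_cast
      rw [← h7]; simpa using h3
    nlinarith [norm_nonneg y']
  calc ‖dotProduct (star x) (D *ᵥ x)‖ = ‖(inner ℂ x' y' : ℂ)‖ := by
        rw [hinner]
    _ ≤ ‖x'‖ * ‖y'‖ := norm_inner_le_norm x' y'
    _ ≤ 1 := by rw [hnx, one_mul]; exact hny

/-- contraction/psd trace bound -/
lemma abs_trace_con_mul_psd {D P : Matrix n n ℂ} (hD : Con D) (hP : P.PosSemidef) :
    ‖(D * P).trace‖ ≤ P.trace.re := by
  classical
  set u : Matrix n n ℂ := (hP.1.eigenvectorUnitary : Matrix n n ℂ) with hu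
  set d : n → ℝ := hP.1.eigenvalues with hd
  have hP' : P = u * Matrix.diagonal (fun i => (d i : ℂ)) * uᴴ := by
    have := cfun_id hP.1
    rw [cfun, Matrix.star_eq_conjTranspose] at this
    exact this.symm
  have hu1 : uᴴ * u = 1 := by
    rw [← Matrix.star_eq_conjTranspose]
    exact Matrix.mem_unitaryGroup_iff'.mp hP.1.eigenvectorUnitary.2
  have htr : (D * P).trace = ∑ i, (uᴴ * (D * u)) i i * (d i : ℂ) := by
    rw [hP']
    have e1 : D * (u * Matrix.diagonal (fun i => (d i : ℂ)) * uᴴ)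
        = (D * u * Matrix.diagonal (fun i => (d i : ℂ))) * uᴴ := by
      simp only [Matrix.mul_assoc]
    rw [e1, Matrix.trace_mul_comm]
    have e2 : uᴴ * (D * u * Matrix.diagonal fun i => (d i : ℂ))
        = (uᴴ * (D * u)) * Matrix.diagonal (fun i => (d i : ℂ)) := by
      simp only [Matrix.mul_assoc]
    rw [e2, Matrix.trace]
    congr 1
    funext i
    rw [Matrix.diag_apply, Matrix.mul_diagonal]
  have hdiag : ∀ i, ‖(uᴴ * (D * u)) i i‖ ≤ 1 := by
    intro i
    set x : n → ℂ := fun j => u j i with hx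
    have hMii : (uᴴ * (D * u)) i i = dotProduct (star x) (D *ᵥ x) := by
      simp only [Matrix.mul_apply, dotProduct, Matrix.mulVec, Matrix.conjTranspose_apply,
        Pi.star_apply, hx]
    have hx1 : dotProduct (star x) x = 1 := by
      have := congrFun (congrFun hu1 i) i
      simp only [Matrix.mul_apply, Matrix.conjTranspose_apply, Matrix.one_apply_eq] at this
      simpa [dotProduct, hx] using this
    rw [hMii]
    exact con_quad_le_one hD x hx1
  have hdnn : ∀ i, 0 ≤ d i := fun i => hP.eigenvalues_nonneg i
  have htrP : P.trace.re = ∑ i, d i := by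
    have := cfun_trace hP.1 (fun x => x)
    rw [cfun_id] at this
    rw [this]
    simp
    rfl
  rw [htr, htrP]
  calc ‖∑ i, (uᴴ * (D * u)) i i * (d i : ℂ)‖
      ≤ ∑ i, ‖(uᴴ * (D * u)) i i * (d i : ℂ)‖ := by
        exact norm_sum_le _ _
    _ ≤ ∑ i, d i := by
        refine Finset.sum_le_sum fun i _ => ?_
        rw [norm_mul]
        have h1 : ‖(d i : ℂ)‖ = d i := by
          rw [Complex.norm_real, Real.norm_eq_abs, abs_of_nonneg (hdnn i)]
        rw [h1]
        calc ‖(uᴴ * (D * u)) i i‖ * d i ≤ 1 * d i :=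
              mul_le_mul_of_nonneg_right (hdiag i) (hdnn i)
          _ = d i := one_mul _


-- extra scalar identities
lemma s_ind2 (x : ℝ) : indfun x * indfun x = indfun x := by
  unfold indfun; by_cases h0 : x = 0 <;> simp [h0]

lemma s_indg (x : ℝ) : indfun x * gfun x = gfun x := by
  rw [mul_comm]; exact s_gind x

lemma s_gx {x : ℝ} (hx : 0 ≤ x) : gfun x * x = Real.sqrt x := by
  unfold gfun
  by_cases h0 : x = 0
  · simp [h0]
  · have hxpos : 0 < x := lt_of_le_of_ne hx (Ne.symm h0)
    rw [if_neg h0]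
    rw [inv_mul_eq_div, eq_comm, eq_div_iff (ne_of_gt (Real.sqrt_pos.mpr hxpos)),
      Real.mul_self_sqrt hx]

lemma s_xg {x : ℝ} (hx : 0 ≤ x) : x * gfun x = Real.sqrt x := by
  rw [mul_comm]; exact s_gx hx

lemma s_sqrt2 {x : ℝ} (hx : 0 ≤ x) : Real.sqrt x * Real.sqrt x = x :=
  Real.mul_self_sqrt hx

lemma cfun_ind_eq {H : Matrix n n ℂ} (hH : H.IsHermitian) :
    cfun hH indfun = 1 - cfun hH pfun := by
  have h := cfun_add hH indfun pfun
  rw [cfun_congr hH (f := indfun + pfun) (g := fun _ => 1) (fun i => s_indsum _), cfun_one] at h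
  exact eq_sub_of_add_eq h

lemma pkill {L : Matrix n m ℂ} (h : (L * Lᴴ).PosSemidef) : cfun h.1 pfun * L = 0 := by
  have hcc : (cfun h.1 pfun * L) * (cfun h.1 pfun * L)ᴴ = 0 := by
    rw [Matrix.conjTranspose_mul, cfun_conjTranspose]
    calc cfun h.1 pfun * L * (Lᴴ * cfun h.1 pfun)
        = cfun h.1 pfun * ((L * Lᴴ) * cfun h.1 pfun) := by simp only [Matrix.mul_assoc]
      _ = 0 := by
          rw [cfun_mul3, cfun_congr h.1 (f := fun x => pfun x * (x * pfun x))
            (g := fun _ => 0) (fun i => s_kill _), cfun_zero]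
  exact Matrix.self_mul_conjTranspose_eq_zero.mp hcc

lemma ind_mul {L : Matrix n m ℂ} (h : (L * Lᴴ).PosSemidef) : cfun h.1 indfun * L = L := by
  rw [cfun_ind_eq, Matrix.sub_mul, Matrix.one_mul, pkill h, sub_zero]

lemma V_mul_conj {L : Matrix n m ℂ} (h : (L * Lᴴ).PosSemidef) :
    (cfun h.1 gfun * L) * (cfun h.1 gfun * L)ᴴ = cfun h.1 indfun := by
  rw [Matrix.conjTranspose_mul, cfun_conjTranspose]
  calc cfun h.1 gfun * L * (Lᴴ * cfun h.1 gfun)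
      = cfun h.1 gfun * ((L * Lᴴ) * cfun h.1 gfun) := by simp only [Matrix.mul_assoc]
    _ = cfun h.1 indfun := by
        rw [cfun_mul3]
        exact cfun_congr h.1 (f := fun x => gfun x * (x * gfun x)) (g := indfun)
          (fun i => s_gxg (h.eigenvalues_nonneg i))

lemma con_Vc {L : Matrix n m ℂ} (h : (L * Lᴴ).PosSemidef) : Con ((cfun h.1 gfun * L)ᴴ) := by
  apply con_of_idem
  rw [Matrix.conjTranspose_conjTranspose, V_mul_conj h, cfun_mul,
    cfun_congr h.1 (f := indfun * indfun) (g := indfun) (fun i => s_ind2 _)]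

lemma indV {L : Matrix n m ℂ} (h : (L * Lᴴ).PosSemidef) :
    cfun h.1 indfun * (cfun h.1 gfun * L) = cfun h.1 gfun * L := by
  rw [← Matrix.mul_assoc, cfun_mul,
    cfun_congr h.1 (f := indfun * gfun) (g := gfun) (fun i => s_indg _)]

lemma con_V {L : Matrix n m ℂ} (h : (L * Lᴴ).PosSemidef) : Con (cfun h.1 gfun * L) := by
  apply con_of_idem
  have e : ((cfun h.1 gfun * L)ᴴ * (cfun h.1 gfun * L)) *
      ((cfun h.1 gfun * L)ᴴ * (cfun h.1 gfun * L))
      = (cfun h.1 gfun * L)ᴴ * (((cfun h.1 gfun * L) * (cfun h.1 gfun * L)ᴴ) *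
        (cfun h.1 gfun * L)) := by simp only [Matrix.mul_assoc]
  rw [e, V_mul_conj h, indV h]

lemma R_eq_LVconj {L : Matrix n m ℂ} (h : (L * Lᴴ).PosSemidef) :
    cfun h.1 Real.sqrt = L * (cfun h.1 gfun * L)ᴴ := by
  rw [Matrix.conjTranspose_mul, cfun_conjTranspose, ← Matrix.mul_assoc]
  have h2 := cfun_mul h.1 (fun x => x) gfun
  rw [cfun_id] at h2
  rw [h2]
  exact (cfun_congr h.1 (f := (fun x => x) * gfun) (g := Real.sqrt)
    (fun i => s_xg (h.eigenvalues_nonneg i))).symm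

lemma R_eq_VL {L : Matrix n m ℂ} (h : (L * Lᴴ).PosSemidef) :
    cfun h.1 Real.sqrt = (cfun h.1 gfun * L) * Lᴴ := by
  rw [Matrix.mul_assoc]
  have h2 := cfun_mul h.1 gfun (fun x => x)
  rw [cfun_id] at h2
  rw [h2]
  exact (cfun_congr h.1 (f := gfun * (fun x => x)) (g := Real.sqrt)
    (fun i => s_gx (h.eigenvalues_nonneg i))).symm

lemma msqrt_posSemidef {H : Matrix n n ℂ} (h : H.PosSemidef) : (msqrt H).PosSemidef := by
  rw [msqrt_eq_cfun h]
  exact cfun_posSemidef h.1 (fun i => Real.sqrt_nonneg _)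

/-- Uhlmann-type inequality: fidelity of the reduced states is dominated by the
best unitary overlap. -/
theorem key_ineq (M N : Matrix n m ℂ) :
    ∃ U ∈ Matrix.unitaryGroup m ℂ,
      fidelity (M * Mᴴ) (N * Nᴴ) ≤ ‖(U * (Nᴴ * M)).trace‖ := by
  classical
  have hρ0 : (M * Mᴴ).PosSemidef := Matrix.posSemidef_self_mul_conjTranspose M
  have hρ1 : (N * Nᴴ).PosSemidef := Matrix.posSemidef_self_mul_conjTranspose N
  set V0 : Matrix n m ℂ := cfun hρ0.1 gfun * M with hV0
  set V1 : Matrix n m ℂ := cfun hρ1.1 gfun * N with hV1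
  set K : Matrix m m ℂ := Nᴴ * M with hK
  set A' : Matrix n n ℂ := cfun hρ1.1 Real.sqrt * cfun hρ0.1 Real.sqrt with hA'
  have hA'fact : A' = V1 * (K * V0ᴴ) := by
    rw [hA', R_eq_VL hρ1, R_eq_LVconj hρ0, hV1, hV0, hK]
    simp only [Matrix.mul_assoc]
  have hAA : A'ᴴ * A' = msqrt (M * Mᴴ) * (N * Nᴴ) * msqrt (M * Mᴴ) := by
    rw [msqrt_eq_cfun hρ0, hA', Matrix.conjTranspose_mul, cfun_conjTranspose,
      cfun_conjTranspose]
    have hR1R1 : cfun hρ1.1 Real.sqrt * cfun hρ1.1 Real.sqrt = N * Nᴴ := by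
      rw [cfun_mul, cfun_congr hρ1.1 (f := Real.sqrt * Real.sqrt) (g := fun x => x)
        (fun i => s_sqrt2 (hρ1.eigenvalues_nonneg i)), cfun_id]
    calc cfun hρ0.1 Real.sqrt * cfun hρ1.1 Real.sqrt *
          (cfun hρ1.1 Real.sqrt * cfun hρ0.1 Real.sqrt)
        = cfun hρ0.1 Real.sqrt * ((cfun hρ1.1 Real.sqrt * cfun hρ1.1 Real.sqrt) *
            cfun hρ0.1 Real.sqrt) := by simp only [Matrix.mul_assoc]
      _ = cfun hρ0.1 Real.sqrt * ((N * Nᴴ) * cfun hρ0.1 Real.sqrt) := by rw [hR1R1]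
      _ = cfun hρ0.1 Real.sqrt * (N * Nᴴ) * cfun hρ0.1 Real.sqrt := by
          rw [← Matrix.mul_assoc]
  have hConV0c : Con V0ᴴ := con_Vc hρ0
  have hConV1 : Con V1 := con_V hρ1
  clear_value V0 V1 K A'
  obtain ⟨U₀, hU₀, hA'pol⟩ := exists_polar A'
  obtain ⟨U₁, hU₁, hKpol⟩ := exists_polar K
  have hPK : (msqrt (Kᴴ * K)).PosSemidef :=
    msqrt_posSemidef (Matrix.posSemidef_conjTranspose_mul_self K)
  have hfid : fidelity (M * Mᴴ) (N * Nᴴ) = ((msqrt (A'ᴴ * A')).trace).re := by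
    unfold fidelity
    rw [hAA]
  have hU₀1 : U₀ᴴ * U₀ = 1 := by
    rw [← Matrix.star_eq_conjTranspose]
    exact Matrix.mem_unitaryGroup_iff'.mp hU₀
  have hU₁1 : U₁ᴴ * U₁ = 1 := by
    rw [← Matrix.star_eq_conjTranspose]
    exact Matrix.mem_unitaryGroup_iff'.mp hU₁
  have htrPA : (msqrt (A'ᴴ * A')).trace = (U₀ᴴ * A').trace := by
    conv_rhs => rw [hA'pol]
    rw [← Matrix.mul_assoc, hU₀1, Matrix.one_mul]
  have htrPK : (msqrt (Kᴴ * K)).trace = (U₁ᴴ * K).trace := by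
    conv_rhs => rw [hKpol]
    rw [← Matrix.mul_assoc, hU₁1, Matrix.one_mul]
  set D : Matrix m m ℂ := V0ᴴ * (U₀ᴴ * (V1 * U₁)) with hD
  have hConD : Con D := by
    rw [hD]
    refine con_mul hConV0c (con_mul ?_ (con_mul hConV1 (con_unitary hU₁)))
    rw [← Matrix.star_eq_conjTranspose]
    exact con_unitary (Unitary.star_mem hU₀)
  have htrD : (U₀ᴴ * A').trace = (D * msqrt (Kᴴ * K)).trace := by
    rw [hA'fact]
    have e1 : U₀ᴴ * (V1 * (K * V0ᴴ)) = (U₀ᴴ * (V1 * K)) * V0ᴴ := by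
      simp only [Matrix.mul_assoc]
    rw [e1, Matrix.trace_mul_comm]
    have e2 : V0ᴴ * (U₀ᴴ * (V1 * K)) = D * msqrt (Kᴴ * K) := by
      rw [hD]
      conv_lhs => rw [hKpol]
      simp only [Matrix.mul_assoc]
    rw [e2]
  refine ⟨U₁ᴴ, ?_, ?_⟩
  · rw [← Matrix.star_eq_conjTranspose]
    exact Unitary.star_mem hU₁
  · calc fidelity (M * Mᴴ) (N * Nᴴ) = ((D * msqrt (Kᴴ * K)).trace).re := by
          rw [hfid, htrPA, htrD]
      _ ≤ ‖(D * msqrt (Kᴴ * K)).trace‖ := Complex.re_le_norm _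
      _ ≤ ((msqrt (Kᴴ * K)).trace).re := abs_trace_con_mul_psd hConD hPK
      _ = ((U₁ᴴ * K).trace).re := by rw [htrPK]
      _ ≤ ‖(U₁ᴴ * K).trace‖ := Complex.re_le_norm _


end Aux

open Matrix in
/-- a (nearly) concealing commitment admits a (nearly) perfect
cheating unitary for Alice. -/
theorem concealing_implies_cheating
    {A B : Type*} [Fintype A] [DecidableEq A] [Fintype B] [DecidableEq B]
    (ε : ℝ) (Ψ : Bool → A × B → ℂ) (hunit : ∀ b, ip (Ψ b) (Ψ b) = 1)
    (hconc : fidelity (ptraceA (proj (Ψ false))) (ptraceA (proj (Ψ true))) ≥ 1 - ε) :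
    ∃ U ∈ Matrix.unitaryGroup A ℂ,
      ‖ip (Ψ false) (applyA U (Ψ true))‖ ≥ 1 - ε := by
  classical
  set M : Matrix B A ℂ := Matrix.of fun b a => Ψ false (a, b) with hM
  set N : Matrix B A ℂ := Matrix.of fun b a => Ψ true (a, b) with hN
  have hpt0 : ptraceA (proj (Ψ false)) = M * Mᴴ := by
    ext i j
    simp [ptraceA, proj, Matrix.mul_apply, Matrix.conjTranspose_apply, hM]
  have hpt1 : ptraceA (proj (Ψ true)) = N * Nᴴ := by
    ext i j
    simp [ptraceA, proj, Matrix.mul_apply, Matrix.conjTranspose_apply, hN]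
  rw [hpt0, hpt1] at hconc
  obtain ⟨W, hWmem, hle⟩ := key_ineq M N
  set U : Matrix A A ℂ := W.map (starRingEnd ℂ) with hU
  have hstarU : star U = (star W).map (starRingEnd ℂ) := by
    ext i j
    simp [hU, Matrix.star_eq_conjTranspose, Matrix.conjTranspose_apply, Matrix.map_apply]
  have hUmem : U ∈ Matrix.unitaryGroup A ℂ := by
    rw [Matrix.mem_unitaryGroup_iff']
    rw [hstarU, hU, ← Matrix.map_mul, Matrix.mem_unitaryGroup_iff'.mp hWmem]
    ext i j
    by_cases h : i = j <;> simp [Matrix.map_apply, Matrix.one_apply, h]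
  refine ⟨U, hUmem, ?_⟩
  have hipeq : ip (Ψ false) (applyA U (Ψ true))
      = (starRingEnd ℂ) ((W * (Nᴴ * M)).trace) := by
    rw [ip, Matrix.trace]
    simp only [Matrix.diag_apply, Matrix.mul_apply, Matrix.conjTranspose_apply, hM, hN,
      Matrix.of_apply, map_sum, _root_.map_mul, Complex.conj_conj, applyA, hU,
      Matrix.map_apply, Fintype.sum_prod_type]
    refine Finset.sum_congr rfl fun a _ => ?_
    simp only [Finset.mul_sum]
    conv_lhs => rw [Finset.sum_comm]
    refine Finset.sum_congr rfl fun a' _ => ?_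
    refine Finset.sum_congr rfl fun b _ => ?_
    simp only [starRingEnd_apply, star_star]
    ring
  rw [hipeq]
  have habs : ‖(starRingEnd ℂ) ((W * (Nᴴ * M)).trace)‖
      = ‖(W * (Nᴴ * M)).trace‖ := Complex.norm_conj _
  rw [habs]
  exact le_trans hconc hle

end QBC
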